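/- (Pathwise sandwich of the occupancy process between the lower and upper processes.) Fix o ∈ 𝒫^m_{ℓ+1} and any finite sequence r_1,…,r_N ∈ ℛ. Define O^ℓ_0 = O_0 = O^1_0 = o and, for 1 ≤ n ≤ N, O^ℓ_n = Ψ_O^ℓ(O^ℓ_{n−1}, r_n), O_n = Ψ_O(O_{n−1}, r_n), O^1_n = Ψ_O^1(O^1_{n−1}, r_n). Then O^ℓ_n ⪯ O_n ⪯ O^1_n for every 0 ≤ n ≤ N. -/

import Mathlib

open Finset

/-- Lumped sharp peak fitness `A_H`. -/
noncomputable def AH (σ : ℝ) (b : ℕ) : ℝ := if b = 0 then σ else 1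

/-- Mutation coupling map `ℳ_H(b, u₁,…,u_ℓ)`. -/
noncomputable def McoupH (κ ℓ : ℕ) (q : ℝ) (b : ℕ) (u : Fin ℓ → ℝ) : ℕ :=
  b - (univ.filter fun k : Fin ℓ => (k : ℕ) < b ∧ u k < q / ((κ : ℝ) - 1)).card
    + (univ.filter fun k : Fin ℓ => b ≤ (k : ℕ) ∧ 1 - q < u k).card

/-- Selection map `S_O(o,s)`. -/
noncomputable def SO (σ : ℝ) (ℓ : ℕ) (o : ℕ → ℕ) (s : ℝ) : ℕ :=
  sInf {l : ℕ |
    s * ∑ h ∈ range (ℓ + 1), (o h : ℝ) * AH σ h < ∑ h ∈ range (l + 1), (o h : ℝ) * AH σ h}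

/-- Occupancy distribution `𝒪_H(d)` of a distance vector `d`. -/
def occOf {m : ℕ} (d : Fin m → ℕ) (l : ℕ) : ℕ := (univ.filter fun i => d i = l).card

/-- Coupling map `Ψ_O` of the occupancy process. -/
noncomputable def PsiO (κ ℓ m : ℕ) (q σ : ℝ)
    (o : ℕ → ℕ) (r : Fin m → Fin (ℓ + 1) → ℝ) : ℕ → ℕ :=
  occOf (fun i : Fin m => McoupH κ ℓ q (SO σ ℓ o (r i 0)) (fun j => r i j.succ))

/-- The partial order `⪯` on occupancy distributions. -/
def occLE (ℓ : ℕ) (o o' : ℕ → ℕ) : Prop :=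
  ∀ l ≤ ℓ, ∑ h ∈ range (l + 1), o h ≤ ∑ h ∈ range (l + 1), o' h

/-- `π_ℓ(o) = (o(0),0,…,0,m−o(0))`. -/
def piLow (ℓ m : ℕ) (o : ℕ → ℕ) : ℕ → ℕ :=
  fun h => if h = 0 then o 0 else if h = ℓ then m - o 0 else 0

/-- `π_1(o) = (o(0),m−o(0),0,…,0)`. -/
def piUp (m : ℕ) (o : ℕ → ℕ) : ℕ → ℕ :=
  fun h => if h = 0 then o 0 else if h = 1 then m - o 0 else 0

/-- The lower map `Ψ_O^ℓ`. -/
noncomputable def PsiOLow (κ ℓ m : ℕ) (q σ : ℝ)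
    (o : ℕ → ℕ) (r : Fin m → Fin (ℓ + 1) → ℝ) : ℕ → ℕ :=
  if 1 ≤ o 0 then piLow ℓ m (PsiO κ ℓ m q σ (piLow ℓ m o) r)
  else if 1 ≤ PsiO κ ℓ m q σ o r 0 then piLow ℓ m (PsiO κ ℓ m q σ o r)
  else PsiO κ ℓ m q σ o r

/-- The upper map `Ψ_O^1`. -/
noncomputable def PsiOUp (κ ℓ m : ℕ) (q σ : ℝ)
    (o : ℕ → ℕ) (r : Fin m → Fin (ℓ + 1) → ℝ) : ℕ → ℕ :=
  if 1 ≤ o 0 then piUp m (PsiO κ ℓ m q σ (piUp m o) r)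
  else if 1 ≤ PsiO κ ℓ m q σ o r 0 then piUp m (PsiO κ ℓ m q σ o r)
  else PsiO κ ℓ m q σ o r

/-- Iteration of a one-step map driven by a sequence of random inputs:
`chain step o r 0 = o` and `chain step o r n = step (chain step o r (n−1)) (r n)`. -/
def chain {α β : Type*} (step : α → β → α) (o : α) (r : ℕ → β) : ℕ → α
  | 0 => o
  | n + 1 => step (chain step o r n) (r (n + 1))

/-!
`Ψ_O` is monotone for `⪯` on occupancy distributions of mass `m`. For the selection step,
`S_O(o, s)` is the least `l` with `s < (P_l(o) + a) / (m + a)`, where `P_l` is the `l`-th partial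
sum and `a = (σ - 1) o(0)`; both `P_l` and `a` grow along `⪯` and `P_l ≤ m`, so the fraction grows
and the selected index drops. For the mutation step, raising `b` by one turns the coordinate `b`
from "mutates forward when `u_b > 1 - q`" into "stays unless `u_b < q / (κ - 1)`", a larger event
because `q / (κ - 1) < 1 - q` (equivalently `q < 1 - 1/κ`); hence `ℳ_H` is monotone in `b`.
Since `π_ℓ(o) ⪯ o ⪯ π_1(o)`, each step of the lower (upper) process applies `Ψ_O` to an
occupancy below (above) the current one and possibly projects down (up) afterwards, and the
sandwich follows by induction along the common inputs `r_n`.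
-/

lemma occLE_refl (ℓ : ℕ) (o : ℕ → ℕ) : occLE ℓ o o := fun _ _ => le_rfl

lemma occLE_trans {ℓ : ℕ} {o₁ o₂ o₃ : ℕ → ℕ} (h₁₂ : occLE ℓ o₁ o₂) (h₂₃ : occLE ℓ o₂ o₃) :
    occLE ℓ o₁ o₃ := fun l hl => (h₁₂ l hl).trans (h₂₃ l hl)

lemma apply_zero_le_of_sum_eq {ℓ m : ℕ} {o : ℕ → ℕ} (ho : ∑ h ∈ range (ℓ + 1), o h = m) :
    o 0 ≤ m :=
  ho ▸ single_le_sum (fun _ _ => Nat.zero_le _) (mem_range.2 ℓ.succ_pos)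

lemma sum_mul_AH (σ : ℝ) (o : ℕ → ℕ) (l : ℕ) :
    ∑ h ∈ range (l + 1), (o h : ℝ) * AH σ h
      = ((∑ h ∈ range (l + 1), o h : ℕ) : ℝ) + (σ - 1) * o 0 := by
  rw [sum_range_succ', sum_range_succ' (fun h => o h)]
  simp only [AH, Nat.add_eq_zero_iff, one_ne_zero, and_false, ↓reduceIte, mul_one, Nat.cast_add,
    Nat.cast_sum]
  ring

lemma add_div_add_le_add_div_add {P P' a a' m : ℝ} (hPm : P ≤ m) (hPP' : P ≤ P')
    (haa' : a ≤ a') (hma : 0 < m + a) :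
    (P + a) / (m + a) ≤ (P' + a') / (m + a') := by
  rw [div_le_div_iff₀ hma (by linarith)]
  nlinarith [mul_nonneg hma.le (sub_nonneg.2 hPP'), mul_nonneg (sub_nonneg.2 hPm) (sub_nonneg.2 haa')]

lemma sum_mul_AH_pos {σ : ℝ} {ℓ m : ℕ} {o : ℕ → ℕ} (hσ : 1 ≤ σ) (hm : 0 < m)
    (ho : ∑ h ∈ range (ℓ + 1), o h = m) :
    0 < ∑ h ∈ range (ℓ + 1), (o h : ℝ) * AH σ h := by
  rw [sum_mul_AH, ho]
  positivity

lemma SO_spec {σ s : ℝ} {ℓ : ℕ} {o : ℕ → ℕ}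
    (hpos : 0 < ∑ h ∈ range (ℓ + 1), (o h : ℝ) * AH σ h) (hs : s < 1) :
    SO σ ℓ o s ≤ ℓ ∧
      s * ∑ h ∈ range (ℓ + 1), (o h : ℝ) * AH σ h
        < ∑ h ∈ range (SO σ ℓ o s + 1), (o h : ℝ) * AH σ h := by
  have hℓ : ℓ ∈ {l : ℕ | s * ∑ h ∈ range (ℓ + 1), (o h : ℝ) * AH σ h
      < ∑ h ∈ range (l + 1), (o h : ℝ) * AH σ h} := by
    simp only [Set.mem_ofPred_eq]
    nlinarith
  exact ⟨Nat.sInf_le hℓ, Nat.sInf_mem ⟨ℓ, hℓ⟩⟩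

lemma SO_antitone {σ s : ℝ} {ℓ m : ℕ} {o o' : ℕ → ℕ} (hσ : 1 ≤ σ) (hm : 0 < m)
    (ho : ∑ h ∈ range (ℓ + 1), o h = m) (ho' : ∑ h ∈ range (ℓ + 1), o' h = m)
    (hle : occLE ℓ o o') (hs : s < 1) :
    SO σ ℓ o' s ≤ SO σ ℓ o s := by
  obtain ⟨hbℓ, hb⟩ := SO_spec (sum_mul_AH_pos hσ hm ho) hs
  set b := SO σ ℓ o s
  refine Nat.sInf_le ?_
  rw [Set.mem_ofPred_eq, sum_mul_AH, sum_mul_AH, ho']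
  rw [sum_mul_AH, sum_mul_AH, ho] at hb
  have hPm : ((∑ h ∈ range (b + 1), o h : ℕ) : ℝ) ≤ m := by
    rw [← ho]; exact_mod_cast sum_le_sum_of_subset (range_subset_range.2 (by omega))
  have h0 : (o 0 : ℝ) ≤ o' 0 := by exact_mod_cast (by simpa using hle 0 ℓ.zero_le)
  have hfrac := add_div_add_le_add_div_add hPm (Nat.cast_le.2 (hle b hbℓ))
    (mul_le_mul_of_nonneg_left h0 (sub_nonneg.2 hσ)) (by positivity)
  rw [← lt_div_iff₀ (by positivity)] at hb ⊢
  exact hb.trans_le hfrac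

lemma McoupH_eq_card {κ ℓ b : ℕ} {q : ℝ} (hb : b ≤ ℓ) (u : Fin ℓ → ℝ) :
    McoupH κ ℓ q b u =
      #{k : Fin ℓ | if (k : ℕ) < b then q / ((κ : ℝ) - 1) ≤ u k else 1 - q < u k} := by
  have hsplit := card_filter_add_card_filter_not (s := {k : Fin ℓ | (k : ℕ) < b})
    (fun k => u k < q / ((κ : ℝ) - 1))
  rw [Fin.card_filter_val_lt, min_eq_right hb, filter_filter, filter_filter] at hsplit
  have hunion : #{k : Fin ℓ | if (k : ℕ) < b then q / ((κ : ℝ) - 1) ≤ u k else 1 - q < u k}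
      = #{k : Fin ℓ | (k : ℕ) < b ∧ ¬u k < q / ((κ : ℝ) - 1)}
        + #{k : Fin ℓ | b ≤ (k : ℕ) ∧ 1 - q < u k} := by
    rw [← card_union_of_disjoint (disjoint_filter.2 fun k _ hk hk' => by omega)]
    congr 1
    ext k
    simp only [mem_union, mem_filter, mem_univ, true_and, not_lt]
    split_ifs with hk <;> simp [hk, le_of_not_gt]
  rw [McoupH, hunion]
  omega

lemma McoupH_le {κ ℓ b : ℕ} {q : ℝ} (hb : b ≤ ℓ) (u : Fin ℓ → ℝ) : McoupH κ ℓ q b u ≤ ℓ := by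
  rw [McoupH_eq_card hb]
  exact (card_filter_le _ _).trans_eq (card_fin ℓ)

lemma McoupH_mono {κ ℓ b b' : ℕ} {q : ℝ} (hq : q / ((κ : ℝ) - 1) < 1 - q)
    (hbb' : b ≤ b') (hb' : b' ≤ ℓ) (u : Fin ℓ → ℝ) :
    McoupH κ ℓ q b u ≤ McoupH κ ℓ q b' u := by
  rw [McoupH_eq_card (hbb'.trans hb'), McoupH_eq_card hb']
  refine card_le_card (monotone_filter_right _ fun k _ hk => ?_)
  split_ifs at hk ⊢ with h h' h' <;> first | exact hk | omega | linarith

lemma sum_range_occOf {m : ℕ} (d : Fin m → ℕ) (n : ℕ) :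
    ∑ h ∈ range n, occOf d h = #{i | d i < n} := by
  rw [card_eq_sum_card_fiberwise (f := d) (t := range n) fun i hi => by simpa using hi]
  refine sum_congr rfl fun h hh => ?_
  rw [filter_filter, occOf]
  congr 1
  ext i
  simp only [mem_filter, mem_univ, true_and, iff_and_self]
  exact fun hi => hi ▸ mem_range.1 hh

lemma occLE_occOf_of_le {ℓ m : ℕ} {d d' : Fin m → ℕ} (h : ∀ i, d' i ≤ d i) :
    occLE ℓ (occOf d) (occOf d') := by
  intro l _
  rw [sum_range_occOf, sum_range_occOf]
  exact card_le_card (monotone_filter_right _ fun i _ hi => (h i).trans_lt hi)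

lemma sum_occOf_of_le {ℓ m : ℕ} {d : Fin m → ℕ} (h : ∀ i, d i ≤ ℓ) :
    ∑ h ∈ range (ℓ + 1), occOf d h = m := by
  rw [sum_range_occOf, filter_true_of_mem fun i _ => Nat.lt_succ_of_le (h i), card_fin]

lemma sum_PsiO {κ ℓ m : ℕ} {q σ : ℝ} {o : ℕ → ℕ} {r : Fin m → Fin (ℓ + 1) → ℝ} (hσ : 1 ≤ σ)
    (ho : ∑ h ∈ range (ℓ + 1), o h = m) (hr : ∀ i, r i 0 < 1) :
    ∑ h ∈ range (ℓ + 1), PsiO κ ℓ m q σ o r h = m :=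
  sum_occOf_of_le fun i => McoupH_le (SO_spec (sum_mul_AH_pos hσ i.pos ho) (hr i)).1 _

lemma PsiO_mono {κ ℓ m : ℕ} {q σ : ℝ} {o o' : ℕ → ℕ} {r : Fin m → Fin (ℓ + 1) → ℝ}
    (hσ : 1 ≤ σ) (hq : q / ((κ : ℝ) - 1) < 1 - q)
    (ho : ∑ h ∈ range (ℓ + 1), o h = m) (ho' : ∑ h ∈ range (ℓ + 1), o' h = m)
    (hle : occLE ℓ o o') (hr : ∀ i, r i 0 < 1) :
    occLE ℓ (PsiO κ ℓ m q σ o r) (PsiO κ ℓ m q σ o' r) :=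
  occLE_occOf_of_le fun i => McoupH_mono hq (SO_antitone hσ i.pos ho ho' hle (hr i))
    (SO_spec (sum_mul_AH_pos hσ i.pos ho) (hr i)).1 _

lemma piLow_eq {ℓ m : ℕ} (hℓ : ℓ ≠ 0) (o : ℕ → ℕ) :
    piLow ℓ m o = Pi.single 0 (o 0) + Pi.single ℓ (m - o 0) := by
  ext h
  rcases eq_or_ne h 0 with rfl | h0
  · simp [piLow, hℓ.symm]
  · rcases eq_or_ne h ℓ with rfl | hℓh
    · simp [piLow, h0]
    · simp [piLow, h0, hℓh]

lemma piUp_eq (m : ℕ) (o : ℕ → ℕ) :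
    piUp m o = Pi.single 0 (o 0) + Pi.single 1 (m - o 0) := by
  ext h
  rcases eq_or_ne h 0 with rfl | h0
  · simp [piUp]
  · by_cases hh : h = 1 <;> simp [piUp, h0, hh]

lemma sum_piLow {ℓ m : ℕ} (hℓ : ℓ ≠ 0) (o : ℕ → ℕ) (l : ℕ) :
    ∑ h ∈ range (l + 1), piLow ℓ m o h = o 0 + if ℓ ≤ l then m - o 0 else 0 := by
  simp [piLow_eq hℓ, sum_add_distrib, sum_pi_single']

lemma sum_piUp (m : ℕ) (o : ℕ → ℕ) (l : ℕ) :
    ∑ h ∈ range (l + 1), piUp m o h = o 0 + if 0 < l then m - o 0 else 0 := by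
  simp [piUp_eq, sum_add_distrib, sum_pi_single']

lemma sum_piLow_self {ℓ m : ℕ} (hℓ : ℓ ≠ 0) {o : ℕ → ℕ} (ho : ∑ h ∈ range (ℓ + 1), o h = m) :
    ∑ h ∈ range (ℓ + 1), piLow ℓ m o h = m := by
  rw [sum_piLow hℓ, if_pos le_rfl, Nat.add_sub_cancel' (apply_zero_le_of_sum_eq ho)]

lemma sum_piUp_self {ℓ m : ℕ} (hℓ : ℓ ≠ 0) {o : ℕ → ℕ} (ho : ∑ h ∈ range (ℓ + 1), o h = m) :
    ∑ h ∈ range (ℓ + 1), piUp m o h = m := by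
  rw [sum_piUp, if_pos (Nat.pos_of_ne_zero hℓ), Nat.add_sub_cancel' (apply_zero_le_of_sum_eq ho)]

lemma piLow_occLE {ℓ m : ℕ} (hℓ : ℓ ≠ 0) {o : ℕ → ℕ} (ho : ∑ h ∈ range (ℓ + 1), o h = m) :
    occLE ℓ (piLow ℓ m o) o := by
  intro l hl
  rcases hl.eq_or_lt with rfl | hl
  · rw [sum_piLow_self hℓ ho, ho]
  · rw [sum_piLow hℓ, if_neg hl.not_ge, add_zero]
    exact single_le_sum (fun _ _ => Nat.zero_le _) (mem_range.2 l.succ_pos)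

lemma occLE_piUp {ℓ m : ℕ} {o : ℕ → ℕ} (ho : ∑ h ∈ range (ℓ + 1), o h = m) :
    occLE ℓ o (piUp m o) := by
  intro l hl
  rw [sum_piUp]
  rcases l.eq_zero_or_pos with rfl | hl0
  · simp
  · rw [if_pos hl0, Nat.add_sub_cancel' (apply_zero_le_of_sum_eq ho), ← ho]
    exact sum_le_sum_of_subset (range_subset_range.2 (by omega))

section Steps

variable {κ ℓ m : ℕ} {q σ : ℝ} {o o' : ℕ → ℕ} {r : Fin m → Fin (ℓ + 1) → ℝ}

lemma sum_PsiOLow (hℓ : ℓ ≠ 0) (hσ : 1 ≤ σ) (ho : ∑ h ∈ range (ℓ + 1), o h = m)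
    (hr : ∀ i, r i 0 < 1) :
    ∑ h ∈ range (ℓ + 1), PsiOLow κ ℓ m q σ o r h = m := by
  unfold PsiOLow
  split_ifs
  · exact sum_piLow_self hℓ (sum_PsiO hσ (sum_piLow_self hℓ ho) hr)
  · exact sum_piLow_self hℓ (sum_PsiO hσ ho hr)
  · exact sum_PsiO hσ ho hr

lemma sum_PsiOUp (hℓ : ℓ ≠ 0) (hσ : 1 ≤ σ) (ho : ∑ h ∈ range (ℓ + 1), o h = m)
    (hr : ∀ i, r i 0 < 1) :
    ∑ h ∈ range (ℓ + 1), PsiOUp κ ℓ m q σ o r h = m := by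
  unfold PsiOUp
  split_ifs
  · exact sum_piUp_self hℓ (sum_PsiO hσ (sum_piUp_self hℓ ho) hr)
  · exact sum_piUp_self hℓ (sum_PsiO hσ ho hr)
  · exact sum_PsiO hσ ho hr

lemma PsiOLow_occLE_PsiO (hℓ : ℓ ≠ 0) (hσ : 1 ≤ σ) (hq : q / ((κ : ℝ) - 1) < 1 - q)
    (ho : ∑ h ∈ range (ℓ + 1), o h = m) (ho' : ∑ h ∈ range (ℓ + 1), o' h = m)
    (hle : occLE ℓ o o') (hr : ∀ i, r i 0 < 1) :
    occLE ℓ (PsiOLow κ ℓ m q σ o r) (PsiO κ ℓ m q σ o' r) := by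
  unfold PsiOLow
  split_ifs
  · have hlow := sum_piLow_self hℓ ho
    exact occLE_trans (piLow_occLE hℓ (sum_PsiO hσ hlow hr))
      (PsiO_mono hσ hq hlow ho' (occLE_trans (piLow_occLE hℓ ho) hle) hr)
  · exact occLE_trans (piLow_occLE hℓ (sum_PsiO hσ ho hr)) (PsiO_mono hσ hq ho ho' hle hr)
  · exact PsiO_mono hσ hq ho ho' hle hr

lemma PsiO_occLE_PsiOUp (hℓ : ℓ ≠ 0) (hσ : 1 ≤ σ) (hq : q / ((κ : ℝ) - 1) < 1 - q)
    (ho : ∑ h ∈ range (ℓ + 1), o h = m) (ho' : ∑ h ∈ range (ℓ + 1), o' h = m)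
    (hle : occLE ℓ o o') (hr : ∀ i, r i 0 < 1) :
    occLE ℓ (PsiO κ ℓ m q σ o r) (PsiOUp κ ℓ m q σ o' r) := by
  unfold PsiOUp
  split_ifs
  · have hup := sum_piUp_self hℓ ho'
    exact occLE_trans (PsiO_mono hσ hq ho hup (occLE_trans hle (occLE_piUp ho')) hr)
      (occLE_piUp (sum_PsiO hσ hup hr))
  · exact occLE_trans (PsiO_mono hσ hq ho ho' hle hr) (occLE_piUp (sum_PsiO hσ ho' hr))
  · exact PsiO_mono hσ hq ho ho' hle hr

end Steps

lemma chain_rel_chain {α β : Type*} {f g : α → β → α} {I : α → Prop} {R : α → α → Prop}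
    {P : β → Prop} (hf : ∀ x b, P b → I x → I (f x b)) (hg : ∀ y b, P b → I y → I (g y b))
    (hfg : ∀ x y b, P b → I x → I y → R x y → R (f x b) (g y b))
    {o : α} (ho : I o) (hR : R o o) {r : ℕ → β} {N : ℕ} (hr : ∀ n, 1 ≤ n → n ≤ N → P (r n)) :
    ∀ n ≤ N, R (chain f o r n) (chain g o r n) := by
  suffices h : ∀ n ≤ N,
      I (chain f o r n) ∧ I (chain g o r n) ∧ R (chain f o r n) (chain g o r n) from
    fun n hn => (h n hn).2.2
  intro n
  induction n with
  | zero => exact fun _ => ⟨ho, ho, hR⟩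
  | succ n ih =>
    intro hn
    obtain ⟨hIf, hIg, hRn⟩ := ih (by omega)
    have hP := hr (n + 1) (by omega) hn
    exact ⟨hf _ _ hP hIf, hg _ _ hP hIg, hfg _ _ _ hP hIf hIg hRn⟩

lemma div_sub_one_lt_one_sub {k q : ℝ} (hk : 1 < k) (hq : q < 1 - 1 / k) :
    q / (k - 1) < 1 - q := by
  have hk0 : 0 < k := by linarith
  have hqk : q * k < k - 1 := by rwa [one_sub_div hk0.ne', lt_div_iff₀ hk0] at hq
  rw [div_lt_iff₀ (by linarith)]
  linarith

theorem occupancy_sandwich_general (κ ℓ m : ℕ) (hκ : 2 ≤ κ) (hℓ : 1 ≤ ℓ)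
    (q σ : ℝ) (hq1 : q < 1 - 1 / κ) (hσ : 1 < σ)
    (o : ℕ → ℕ) (ho : ∑ h ∈ range (ℓ + 1), o h = m)
    (N : ℕ) (r : ℕ → Fin m → Fin (ℓ + 1) → ℝ)
    (hr : ∀ n, 1 ≤ n → n ≤ N → ∀ i j, 0 ≤ r n i j ∧ r n i j < 1) :
    ∀ n ≤ N,
      occLE ℓ (chain (PsiOLow κ ℓ m q σ) o r n) (chain (PsiO κ ℓ m q σ) o r n) ∧
      occLE ℓ (chain (PsiO κ ℓ m q σ) o r n) (chain (PsiOUp κ ℓ m q σ) o r n) := by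
  have hℓ0 : ℓ ≠ 0 := Nat.one_le_iff_ne_zero.mp hℓ
  have hq : q / ((κ : ℝ) - 1) < 1 - q :=
    div_sub_one_lt_one_sub (by exact_mod_cast Nat.lt_of_succ_le hκ) hq1
  have hr0 : ∀ n, 1 ≤ n → n ≤ N → ∀ i, r n i 0 < 1 := fun n h₁ h₂ i => (hr n h₁ h₂ i 0).2
  intro n hn
  constructor
  · refine chain_rel_chain (I := fun x => ∑ h ∈ range (ℓ + 1), x h = m)
      (P := fun b : Fin m → Fin (ℓ + 1) → ℝ => ∀ i, b i 0 < 1) ?_ ?_ ?_ ho (occLE_refl ℓ o) hr0 n hn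
    · exact fun _ _ hb hx => sum_PsiOLow hℓ0 hσ.le hx hb
    · exact fun _ _ hb hy => sum_PsiO hσ.le hy hb
    · exact fun _ _ _ hb hx hy hxy => PsiOLow_occLE_PsiO hℓ0 hσ.le hq hx hy hxy hb
  · refine chain_rel_chain (I := fun x => ∑ h ∈ range (ℓ + 1), x h = m)
      (P := fun b : Fin m → Fin (ℓ + 1) → ℝ => ∀ i, b i 0 < 1) ?_ ?_ ?_ ho (occLE_refl ℓ o) hr0 n hn
    · exact fun _ _ hb hx => sum_PsiO hσ.le hx hb
    · exact fun _ _ hb hy => sum_PsiOUp hℓ0 hσ.le hy hb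
    · exact fun _ _ _ hb hx hy hxy => PsiO_occLE_PsiOUp hℓ0 hσ.le hq hx hy hxy hb

/-- Pathwise sandwich of the occupancy process between the lower and upper
processes: started from the same occupancy distribution and driven by the same
random inputs `r_1,…,r_N`, one has `O^ℓ_n ⪯ O_n ⪯ O^1_n` for all `0 ≤ n ≤ N`. -/
theorem occupancy_sandwich (κ ℓ m : ℕ) (hκ : 2 ≤ κ) (hℓ : 1 ≤ ℓ) (hm : 1 ≤ m)
    (q σ : ℝ) (hq0 : 0 < q) (hq1 : q < 1 - 1 / κ) (hσ : 1 < σ)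
    (o : ℕ → ℕ) (hov : ∀ h, ℓ < h → o h = 0) (ho : ∑ h ∈ range (ℓ + 1), o h = m)
    (N : ℕ) (r : ℕ → Fin m → Fin (ℓ + 1) → ℝ)
    (hr : ∀ n, 1 ≤ n → n ≤ N → ∀ i j, 0 ≤ r n i j ∧ r n i j < 1) :
    ∀ n ≤ N,
      occLE ℓ (chain (PsiOLow κ ℓ m q σ) o r n) (chain (PsiO κ ℓ m q σ) o r n) ∧
      occLE ℓ (chain (PsiO κ ℓ m q σ) o r n) (chain (PsiOUp κ ℓ m q σ) o r n) :=
  occupancy_sandwich_general κ ℓ m hκ hℓ q σ hq1 hσ o ho N r hr
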